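/- arXiv:1311.0649 — 5 statements merged into one kernel-verified Lean document; each statement's English description precedes it below -/
import Mathlib

section
/- The function f defined by f(t) = (1/√t)·log((1+√t)/(1-√t)) for 0<t<1, f(0)=2, and f(t) = (2/√|t|)·arctan(√|t|) for t<0, is continuous and strictly increasing on (-∞,1) with range (0,∞). -/
/-!
Substituting `t = -u²` and `t = u²` with `u ≥ 0` gives `f (-u²) = 2 arctan u / u` and
`f (u²) = 2 artanh u / u`: on either side of `0`, `f / 2` is the difference quotient at `0` of
`arctan`, resp. `artanh`, and its value `2` at `0` is twice their common derivative there.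
Difference quotients of a strictly concave (convex) function are strictly decreasing
(increasing); `arctan` is strictly concave on `[0, ∞)` and `artanh` strictly convex on `[0, 1)`,
and since `u = √|t|` decreases in `t` on the negative side, `f` is strictly increasing on both
halves. Continuity comes from differentiability at `0`. As `arctan < π / 2`, `f` gets arbitrarily
small for very negative `t`, while `artanh u → ∞` as `u → 1`; the intermediate value theorem
then yields the range.
-/

open Real Set

/-- The function `f` from the paper, defined piecewise on `(-∞, 1)`. -/
noncomputable def kingmanF (t : ℝ) : ℝ :=
  if 0 < t then (1 / Real.sqrt t) * Real.log ((1 + Real.sqrt t) / (1 - Real.sqrt t))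
  else if t = 0 then 2
  else (2 / Real.sqrt |t|) * Real.arctan (Real.sqrt |t|)

open Topology

namespace Real

theorem hasDerivAt_artanh {x : ℝ} (hx : x ∈ Ioo (-1) 1) :
    HasDerivAt artanh (1 - x ^ 2)⁻¹ x := by
  have h₁ : 0 < 1 + x := by linarith [hx.1]
  have h₂ : 0 < 1 - x := by linarith [hx.2]
  have hlog : (fun y => (log (1 + y) - log (1 - y)) / 2) =ᶠ[𝓝 x] artanh := by
    filter_upwards [Ioo_mem_nhds hx.1 hx.2] with y hy
    rw [artanh_eq_half_log (Ioo_subset_Icc_self hy),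
      log_div (by linarith [hy.1]) (by linarith [hy.2])]
    ring
  have hd := ((((hasDerivAt_id' x).const_add 1).log h₁.ne').sub
    (((hasDerivAt_id' x).const_sub 1).log h₂.ne')).div_const 2
  refine (hd.congr_of_eventuallyEq hlog.symm).congr_deriv ?_
  rw [show 1 - x ^ 2 = (1 + x) * (1 - x) by ring]
  field_simp
  ring

theorem strictConvexOn_artanh : StrictConvexOn ℝ (Ico 0 1) artanh := by
  have hd : ∀ x ∈ Ico (0 : ℝ) 1, HasDerivAt artanh (1 - x ^ 2)⁻¹ x :=
    fun x hx => hasDerivAt_artanh ⟨by linarith [hx.1], hx.2⟩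
  refine StrictMonoOn.strictConvexOn_of_deriv (convex_Ico 0 1)
    (fun x hx => (hd x hx).continuousAt.continuousWithinAt) ?_
  rw [interior_Ico]
  intro x hx y hy hxy
  rw [(hd x (Ioo_subset_Ico_self hx)).deriv, (hd y (Ioo_subset_Ico_self hy)).deriv]
  have hy₂ : 0 < 1 - y ^ 2 := by nlinarith [hy.1, hy.2]
  gcongr
  exact hx.1.le

theorem strictConcaveOn_arctan : StrictConcaveOn ℝ (Ici 0) arctan := by
  refine StrictAntiOn.strictConcaveOn_of_deriv (convex_Ici 0) continuous_arctan.continuousOn ?_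
  rw [interior_Ici, deriv_arctan]
  intro x hx y hy hxy
  dsimp only
  gcongr
  exact le_of_lt hx

end Real

section dslope

variable {s : Set ℝ} {f : ℝ → ℝ} {a : ℝ}

theorem StrictConvexOn.strictMonoOn_dslope (hf : StrictConvexOn ℝ s f) (ha : a ∈ s)
    (hd : DifferentiableAt ℝ f a) : StrictMonoOn (dslope f a) s := by
  intro x hx y hy hxy
  rcases eq_or_ne x a with rfl | hxa
  · rw [dslope_same, dslope_of_ne f hxy.ne']
    exact hf.deriv_lt_slope hx hy hxy hd
  rcases eq_or_ne y a with rfl | hya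
  · rw [dslope_same, dslope_of_ne f hxy.ne, slope_comm]
    exact hf.slope_lt_deriv hx hy hxy hd
  rw [dslope_of_ne f hxa, dslope_of_ne f hya, slope_def_field, slope_def_field]
  exact hf.secant_strict_mono ha hx hy hxa hya hxy

theorem StrictConcaveOn.strictAntiOn_dslope (hf : StrictConcaveOn ℝ s f) (ha : a ∈ s)
    (hd : DifferentiableAt ℝ f a) : StrictAntiOn (dslope f a) s := by
  intro x hx y hy hxy
  rcases eq_or_ne x a with rfl | hxa
  · rw [dslope_same, dslope_of_ne f hxy.ne']
    exact hf.slope_lt_deriv hx hy hxy hd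
  rcases eq_or_ne y a with rfl | hya
  · rw [dslope_same, dslope_of_ne f hxy.ne, slope_comm]
    exact hf.deriv_lt_slope hx hy hxy hd
  rw [dslope_of_ne f hxa, dslope_of_ne f hya, slope_def_field, slope_def_field]
  exact hf.secant_strict_mono ha hx hy hxa hya hxy

end dslope

theorem ContinuousOn.Iio_of_Iic_of_Ico {α β : Type*} [TopologicalSpace α] [LinearOrder α]
    [OrderTopology α] [TopologicalSpace β] {f : α → β} {a b : α}
    (h₁ : ContinuousOn f (Iic a)) (h₂ : ContinuousOn f (Ico a b)) : ContinuousOn f (Iio b) := by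
  intro t ht
  rcases lt_trichotomy t a with hta | rfl | hat
  · exact ((h₁ t hta.le).continuousAt (Iic_mem_nhds hta)).continuousWithinAt
  · exact ((h₁ t le_rfl).union (h₂ t ⟨le_rfl, ht⟩)).mono Iio_subset_Iic_union_Ico
  · exact ((h₂ t ⟨hat.le, ht⟩).continuousAt (Ico_mem_nhds hat ht)).continuousWithinAt

theorem sqrt_mem_Ico_zero_one {t : ℝ} (ht : t ∈ Ico 0 1) : √t ∈ Ico 0 1 :=
  ⟨sqrt_nonneg t, (sqrt_lt' one_pos).2 (by simpa using ht.2)⟩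

theorem kingmanF_eq_dslope_arctan {t : ℝ} (ht : t ≤ 0) :
    kingmanF t = 2 * dslope arctan 0 √(-t) := by
  rcases ht.lt_or_eq with ht | rfl
  · have hs : √(-t) ≠ 0 := (sqrt_pos.2 (neg_pos.2 ht)).ne'
    rw [kingmanF, if_neg ht.not_gt, if_neg ht.ne, abs_of_neg ht, dslope_of_ne _ hs,
      slope_def_field, arctan_zero]
    ring
  · simp [kingmanF, Real.deriv_arctan]

theorem kingmanF_eq_dslope_artanh {t : ℝ} (ht : t ∈ Ico 0 1) :
    kingmanF t = 2 * dslope artanh 0 √t := by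
  rcases ht.1.lt_or_eq with ht₀ | rfl
  · have hs : √t ∈ Icc (-1) 1 :=
      ⟨by linarith [sqrt_nonneg t], (sqrt_mem_Ico_zero_one ht).2.le⟩
    rw [kingmanF, if_pos ht₀, dslope_of_ne _ (sqrt_pos.2 ht₀).ne', slope_def_field,
      artanh_zero, artanh_eq_half_log hs]
    ring
  · simp [kingmanF, (hasDerivAt_artanh (by norm_num : (0 : ℝ) ∈ Ioo (-1) 1)).deriv]

theorem continuousOn_kingmanF_Iic : ContinuousOn kingmanF (Iic 0) := by
  have hd : Continuous (dslope arctan 0) :=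
    continuousOn_univ.1 <| (continuousOn_dslope Filter.univ_mem).2
      ⟨continuous_arctan.continuousOn, differentiableAt_arctan 0⟩
  exact (continuous_const.mul (hd.comp (continuous_sqrt.comp continuous_neg))).continuousOn.congr
    fun t ht => kingmanF_eq_dslope_arctan ht

theorem continuousOn_kingmanF_Ico : ContinuousOn kingmanF (Ico 0 1) := by
  have hd : ContinuousOn (dslope artanh 0) (Ioo (-1) 1) :=
    (continuousOn_dslope (Ioo_mem_nhds (by norm_num) (by norm_num))).2
      ⟨fun x hx => (hasDerivAt_artanh hx).continuousAt.continuousWithinAt,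
        (hasDerivAt_artanh (by norm_num)).differentiableAt⟩
  refine (continuousOn_const.mul (hd.comp continuous_sqrt.continuousOn ?_)).congr
    fun t ht => kingmanF_eq_dslope_artanh ht
  exact fun t ht => ⟨by linarith [sqrt_nonneg t], (sqrt_mem_Ico_zero_one ht).2⟩

theorem strictMonoOn_kingmanF_Iic : StrictMonoOn kingmanF (Iic 0) := by
  intro s hs t ht hst
  rw [kingmanF_eq_dslope_arctan hs, kingmanF_eq_dslope_arctan ht]
  have := strictConcaveOn_arctan.strictAntiOn_dslope self_mem_Ici (differentiableAt_arctan 0)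
    (sqrt_nonneg (-t)) (sqrt_nonneg (-s)) (sqrt_lt_sqrt (neg_nonneg.2 ht) (neg_lt_neg hst))
  linarith

theorem strictMonoOn_kingmanF_Ico : StrictMonoOn kingmanF (Ico 0 1) := by
  intro s hs t ht hst
  rw [kingmanF_eq_dslope_artanh hs, kingmanF_eq_dslope_artanh ht]
  have := strictConvexOn_artanh.strictMonoOn_dslope (left_mem_Ico.2 one_pos)
    (hasDerivAt_artanh (by norm_num)).differentiableAt (sqrt_mem_Ico_zero_one hs)
    (sqrt_mem_Ico_zero_one ht) (sqrt_lt_sqrt hs.1 hst)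
  linarith

theorem kingmanF_pos {t : ℝ} (ht : t < 1) : 0 < kingmanF t := by
  rcases le_or_gt t 0 with ht₀ | ht₀
  · rw [kingmanF_eq_dslope_arctan ht₀]
    rcases eq_or_ne √(-t) 0 with hs | hs
    · simp [hs, Real.deriv_arctan]
    · rw [dslope_of_ne _ hs]
      exact mul_pos two_pos
        ((arctan_strictMono.strictMonoOn univ).slope_pos trivial trivial hs.symm)
  · calc (0 : ℝ) < kingmanF 0 := by simp [kingmanF]
      _ < kingmanF t := strictMonoOn_kingmanF_Ico ⟨le_rfl, one_pos⟩ ⟨ht₀.le, ht⟩ ht₀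

theorem kingmanF_neg_sq_lt {u : ℝ} (hu : 0 < u) : kingmanF (-u ^ 2) < π / u := by
  rw [kingmanF_eq_dslope_arctan (neg_nonpos.2 (sq_nonneg u)), neg_neg, sqrt_sq hu.le,
    dslope_of_ne _ hu.ne', slope_def_field, arctan_zero, sub_zero, sub_zero, ← mul_div_assoc,
    div_lt_div_iff_of_pos_right hu]
  linarith [arctan_lt_pi_div_two u]

theorem neg_log_one_sub_lt_kingmanF_sq {x : ℝ} (hx : x ∈ Ioo 0 1) :
    -log (1 - x) < kingmanF (x ^ 2) := by
  rw [kingmanF, if_pos (pow_pos hx.1 2), sqrt_sq hx.1.le]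
  have hlog : -log (1 - x) < log ((1 + x) / (1 - x)) := by
    rw [log_div (by linarith [hx.1]) (by linarith [hx.2])]
    linarith [log_pos (by linarith [hx.1] : 1 < 1 + x)]
  have hpos : 0 < -log (1 - x) := neg_pos.2 (log_neg (by linarith [hx.2]) (by linarith [hx.1]))
  calc -log (1 - x) < log ((1 + x) / (1 - x)) := hlog
    _ ≤ 1 / x * log ((1 + x) / (1 - x)) :=
      le_mul_of_one_le_left (by linarith) (one_le_one_div hx.1 hx.2.le)

theorem continuousOn_kingmanF : ContinuousOn kingmanF (Iio 1) :=
  continuousOn_kingmanF_Iic.Iio_of_Iic_of_Ico continuousOn_kingmanF_Ico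

theorem strictMonoOn_kingmanF : StrictMonoOn kingmanF (Iio 1) :=
  Iic_union_Ico_eq_Iio (zero_lt_one' ℝ) ▸
    strictMonoOn_kingmanF_Iic.union strictMonoOn_kingmanF_Ico isGreatest_Iic
      (isLeast_Ico (zero_lt_one' ℝ))

theorem image_kingmanF_Iio : kingmanF '' Iio 1 = Ioi 0 := by
  refine (image_subset_iff.2 fun t ht => kingmanF_pos ht).antisymm fun y (hy : 0 < y) => ?_
  have hx : 1 - exp (-y) ∈ Ioo 0 1 :=
    ⟨sub_pos.2 (exp_lt_one_iff.2 (neg_neg_of_pos hy)), sub_lt_self 1 (exp_pos _)⟩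
  have hlow : kingmanF (-(π / y) ^ 2) < y := by
    simpa [div_div_cancel₀ pi_ne_zero] using kingmanF_neg_sq_lt (div_pos pi_pos hy)
  have hhigh : y < kingmanF ((1 - exp (-y)) ^ 2) := by
    simpa using neg_log_one_sub_lt_kingmanF_sq hx
  refine isPreconnected_Iio.intermediate_value ?_ ?_ continuousOn_kingmanF ⟨hlow.le, hhigh.le⟩
  · exact (neg_nonpos.2 (sq_nonneg (π / y))).trans_lt one_pos
  · exact pow_lt_one₀ hx.1.le hx.2 two_ne_zero

/-- `f` is continuous and strictly increasing on `(-∞,1)` with range `(0,∞)`. -/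
theorem kingmanF_continuous_strictMono_range :
    ContinuousOn kingmanF (Iio 1) ∧ StrictMonoOn kingmanF (Iio 1) ∧
      kingmanF '' (Iio 1) = Ioi 0 :=
  ⟨continuousOn_kingmanF, strictMonoOn_kingmanF, image_kingmanF_Iio⟩
end

section
/- Define Λ(t) = -∫₁^∞ log(1 - 2t/x²) dx for t ≤ 1/2 and Λ(t) = ∞ for t > 1/2. Then Λ is differentiable on (-∞,1/2) with Λ'(t) = ∫₁^∞ 2/(x² - 2t) dx, and Λ'(tₙ) → ∞ for any sequence tₙ ↑ 1/2 (i.e., Λ is steep). -/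
/-!
On a ball around `t < 1/2` whose right end `b` is still below `1/2`, the `s`-derivative
`-2/(x² - 2s)` of the integrand is dominated by `2/(x² - 2b) = O(x⁻²)`, so `Λ` may be
differentiated under the integral sign. For steepness, `x² - 2t ≤ 3(x - 2t)` on `[1, 2]`, whence
`Λ'(t) ≥ (2/3) ∫₁² dx/(x - 2t) ≥ -(2/3) log(1 - 2t)`, which tends to `∞` as `t → 1/2⁻`.
-/

open Real Set MeasureTheory Filter Topology

lemma integrableOn_Ioi_inv_sq : IntegrableOn (fun x : ℝ => (x ^ 2)⁻¹) (Ioi 1) := by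
  refine (integrableOn_Ioi_rpow_of_lt (by norm_num : (-2 : ℝ) < -1) one_pos).congr_fun
    (fun x hx => ?_) measurableSet_Ioi
  simp only [rpow_neg (zero_lt_one.trans hx).le, rpow_two]

lemma min_one_sub_le_one_sub_div_sq {a x : ℝ} (hx : 1 ≤ x) : min 1 (1 - a) ≤ 1 - a / x ^ 2 := by
  have hx2 : 1 ≤ x ^ 2 := one_le_pow₀ hx
  rcases le_or_gt a 0 with ha | ha
  · exact (min_le_left _ _).trans
      (le_sub_self_iff _ |>.2 (div_nonpos_of_nonpos_of_nonneg ha (by positivity)))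
  · exact (min_le_right _ _).trans (sub_le_sub_left (div_le_self ha.le hx2) _)

lemma abs_log_le_abs_sub_one_div {y δ : ℝ} (hδ : 0 < δ) (hδ1 : δ ≤ 1) (hy : δ ≤ y) :
    |log y| ≤ |y - 1| / δ := by
  have hy0 : 0 < y := hδ.trans_le hy
  rcases le_or_gt 1 y with h1 | h1
  · rw [abs_of_nonneg (log_nonneg h1), abs_of_nonneg (sub_nonneg.2 h1)]
    exact (log_le_sub_one_of_pos hy0).trans (le_div_self (sub_nonneg.2 h1) hδ hδ1)
  · rw [abs_of_neg (log_neg hy0 h1), abs_of_neg (sub_neg.2 h1), neg_sub, ← log_inv]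
    calc log y⁻¹ ≤ y⁻¹ - 1 := log_le_sub_one_of_pos (inv_pos.2 hy0)
      _ = (1 - y) / y := by field_simp
      _ ≤ (1 - y) / δ := div_le_div_of_nonneg_left (sub_nonneg.2 h1.le) hδ hy

lemma integrableOn_Ioi_div_sq_sub {a : ℝ} (ha : a < 1) (c : ℝ) :
    IntegrableOn (fun x : ℝ => c / (x ^ 2 - a)) (Ioi 1) := by
  set δ := min 1 (1 - a)
  have hδ : 0 < δ := lt_min one_pos (sub_pos.2 ha)
  refine (integrableOn_Ioi_inv_sq.const_mul (|c| / δ)).mono'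
    (Measurable.aestronglyMeasurable (by fun_prop)) ?_
  filter_upwards [ae_restrict_mem measurableSet_Ioi] with x (hx : 1 < x)
  have hx2 : 0 < x ^ 2 := by positivity
  have hδx : x ^ 2 * δ ≤ x ^ 2 - a := by
    have := mul_le_mul_of_nonneg_left (min_one_sub_le_one_sub_div_sq (a := a) hx.le) hx2.le
    rwa [mul_sub, mul_div_cancel₀ _ hx2.ne', mul_one] at this
  rw [norm_div, norm_eq_abs, norm_of_nonneg ((mul_pos hx2 hδ).le.trans hδx), div_mul_eq_mul_div,
    ← div_eq_mul_inv, div_div]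
  gcongr

lemma integrableOn_Ioi_log_one_sub_div_sq {a : ℝ} (ha : a < 1) :
    IntegrableOn (fun x : ℝ => log (1 - a / x ^ 2)) (Ioi 1) := by
  set δ := min 1 (1 - a)
  have hδ : 0 < δ := lt_min one_pos (sub_pos.2 ha)
  refine (integrableOn_Ioi_inv_sq.const_mul (|a| / δ)).mono'
    (Measurable.aestronglyMeasurable (by fun_prop)) ?_
  filter_upwards [ae_restrict_mem measurableSet_Ioi] with x (hx : 1 < x)
  calc ‖log (1 - a / x ^ 2)‖ ≤ |1 - a / x ^ 2 - 1| / δ :=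
        abs_log_le_abs_sub_one_div hδ (min_le_left _ _) (min_one_sub_le_one_sub_div_sq hx.le)
    _ = |a| / δ * (x ^ 2)⁻¹ := by
        rw [sub_sub_cancel_left, abs_neg, abs_div, abs_of_pos (by positivity : 0 < x ^ 2)]
        ring

lemma hasDerivAt_log_one_sub_two_mul_div_sq {x s : ℝ} (hx : x ≠ 0) (hs : 2 * s < x ^ 2) :
    HasDerivAt (fun s => log (1 - 2 * s / x ^ 2)) (-(2 / (x ^ 2 - 2 * s))) s := by
  have hx2 : 0 < x ^ 2 := by positivity
  have hpos : 0 < 1 - 2 * s / x ^ 2 := by rwa [sub_pos, div_lt_one hx2]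
  have hlin : HasDerivAt (fun s => 1 - 2 * s / x ^ 2) (-(2 / x ^ 2)) s := by
    simpa using (((hasDerivAt_id s).const_mul 2).div_const (x ^ 2)).const_sub 1
  convert hlin.log hpos.ne' using 1
  field_simp

theorem hasDerivAt_neg_integral_log_one_sub_div_sq (t : ℝ) (ht : t < 1 / 2) :
    HasDerivAt (fun s : ℝ => -∫ x in Ioi (1:ℝ), log (1 - 2 * s / x ^ 2))
      (∫ x in Ioi (1:ℝ), 2 / (x ^ 2 - 2 * t)) t := by
  set b := (1 / 2 + t) / 2 with hb_def
  have hb : 2 * b < 1 := by linarith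
  have hlt_of_mem {s : ℝ} (hs : s ∈ Metric.ball t (b - t)) : 2 * s < 2 * b := by
    rw [Metric.mem_ball, dist_eq] at hs
    linarith [(abs_lt.1 hs).2]
  have hderiv := hasDerivAt_integral_of_dominated_loc_of_deriv_le
    (μ := volume.restrict (Ioi 1)) (F := fun s x => log (1 - 2 * s / x ^ 2))
    (F' := fun s x => -(2 / (x ^ 2 - 2 * s))) (bound := fun x => 2 / (x ^ 2 - 2 * b))
    (Metric.ball_mem_nhds t (by linarith : 0 < b - t))
    (.of_forall fun s => Measurable.aestronglyMeasurable (by fun_prop))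
    (integrableOn_Ioi_log_one_sub_div_sq (by linarith))
    (Measurable.aestronglyMeasurable (by fun_prop))
    ?_ (integrableOn_Ioi_div_sq_sub hb 2) ?_
  · rw [integral_neg] at hderiv
    exact hderiv.2.neg.congr_deriv (neg_neg _)
  · filter_upwards [ae_restrict_mem measurableSet_Ioi] with x (hx : 1 < x) s hs
    have hs := hlt_of_mem hs
    have hbx : 2 * b < x ^ 2 := by nlinarith
    rw [norm_neg, norm_of_nonneg (div_nonneg zero_le_two (by linarith))]
    gcongr
  · filter_upwards [ae_restrict_mem measurableSet_Ioi] with x (hx : 1 < x) s hs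
    exact hasDerivAt_log_one_sub_two_mul_div_sq (by positivity) (by nlinarith [hlt_of_mem hs])

lemma neg_log_le_integral_div_sq_sub {t : ℝ} (ht : t < 1 / 2) :
    -(2 / 3) * log (1 - 2 * t) ≤ ∫ x in Ioi (1:ℝ), 2 / (x ^ 2 - 2 * t) := by
  have hsub_pos {x : ℝ} (hx : 1 ≤ x) : 0 < x - 2 * t := by linarith
  have hint : IntegrableOn (fun x : ℝ => 2 / (x ^ 2 - 2 * t)) (Ioi 1) :=
    integrableOn_Ioi_div_sq_sub (by linarith) 2
  calc -(2 / 3) * log (1 - 2 * t)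
      ≤ 2 / 3 * log ((2 - 2 * t) / (1 - 2 * t)) := by
        rw [log_div (by linarith) (by linarith)]
        nlinarith [log_nonneg (by linarith : (1:ℝ) ≤ 2 - 2 * t)]
    _ = ∫ x in (1:ℝ)..2, 2 / 3 * (x - 2 * t)⁻¹ := by
        rw [intervalIntegral.integral_const_mul,
          intervalIntegral.integral_comp_sub_right (fun x => x⁻¹),
          integral_inv_of_pos (by linarith) (by linarith)]
    _ ≤ ∫ x in (1:ℝ)..2, 2 / (x ^ 2 - 2 * t) := by
        refine intervalIntegral.integral_mono_on one_le_two ?_ ?_ fun x ⟨hx1, hx2⟩ => ?_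
        · refine (continuousOn_const.mul ((continuousOn_id.sub continuousOn_const).inv₀
            fun x hx => ?_)).intervalIntegrable
          rw [uIcc_of_le one_le_two] at hx
          exact (hsub_pos hx.1).ne'
        · exact (intervalIntegrable_iff_integrableOn_Ioc_of_le one_le_two).2
            (hint.mono_set Ioc_subset_Ioi_self)
        · have := hsub_pos hx1
          rw [← div_eq_mul_inv, div_div]
          gcongr
          · nlinarith
          · nlinarith
    _ = ∫ x in Ioc (1:ℝ) 2, 2 / (x ^ 2 - 2 * t) := intervalIntegral.integral_of_le one_le_two
    _ ≤ ∫ x in Ioi (1:ℝ), 2 / (x ^ 2 - 2 * t) := by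
        refine setIntegral_mono_set hint ?_ (Ioc_subset_Ioi_self.eventuallyLE)
        filter_upwards [ae_restrict_mem measurableSet_Ioi] with x (hx : 1 < x)
        have : 0 < x ^ 2 - 2 * t := by nlinarith
        positivity

theorem tendsto_integral_div_sq_sub_atTop :
    Tendsto (fun t => ∫ x in Ioi (1:ℝ), 2 / (x ^ 2 - 2 * t)) (𝓝[<] (1 / 2)) atTop := by
  have hgap : Tendsto (fun t : ℝ => 1 - 2 * t) (𝓝[<] (1 / 2)) (𝓝[>] 0) := by
    refine tendsto_nhdsWithin_iff.2 ⟨?_, eventually_nhdsWithin_of_forall fun t (ht : t < 1 / 2) =>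
      show 0 < 1 - 2 * t by linarith⟩
    exact ((continuous_const.sub (continuous_const.mul continuous_id)).tendsto' _ _
      (by norm_num)).mono_left nhdsWithin_le_nhds
  refine tendsto_atTop_mono' _ ?_
    ((tendsto_log_nhdsGT_zero.comp hgap).const_mul_atBot_of_neg (by norm_num : -(2 / 3 : ℝ) < 0))
  exact eventually_nhdsWithin_of_forall fun t ht => neg_log_le_integral_div_sq_sub ht

/-- The limiting log-mgf `Λ(t) = -∫₁^∞ log(1 - 2t/x²) dx` (for `t ≤ 1/2`, and `∞` for
`t > 1/2`) is differentiable on `(-∞, 1/2)` with `Λ'(t) = ∫₁^∞ 2/(x² - 2t) dx`, and it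
is steep: `Λ'(tₙ) → ∞` whenever `tₙ < 1/2` and `tₙ → 1/2`. -/
theorem kingman_Lambda_differentiable_steep :
    (∀ t : ℝ, t < 1 / 2 →
      HasDerivAt (fun s : ℝ => -∫ x in Ioi (1:ℝ), Real.log (1 - 2 * s / x ^ 2))
        (∫ x in Ioi (1:ℝ), 2 / (x ^ 2 - 2 * t)) t) ∧
    (∀ u : ℕ → ℝ, (∀ n, u n < 1 / 2) → Tendsto u atTop (nhds (1 / 2)) →
      Tendsto (fun n => ∫ x in Ioi (1:ℝ), 2 / (x ^ 2 - 2 * u n)) atTop atTop) :=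
  ⟨hasDerivAt_neg_integral_log_one_sub_div_sq, fun _ hu hlim =>
    tendsto_integral_div_sq_sub_atTop.comp (tendsto_nhdsWithin_iff.2 ⟨hlim, .of_forall hu⟩)⟩
end

section
/- Define the rate function I(x) = (t_x/2)·x + ∫₁^∞ log(1 - t_x/y²) dy for x > 0, where t_x < 1 solves f(t_x) = x (f as above), and I(x) = ∞ for x ≤ 0. Then I(2) = 0 and I(x) > 0 for x > 0 with x ≠ 2. -/
/-!
Write `t = t_x`. For `t = s²` with `0 < s < 1`, and for `t = -s²` with `0 < s`, the integral has
the elementary antiderivative `y log(1 - t/y²) + 2s artanh(s/y)`, resp.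
`y log(1 - t/y²) - 2s arctan(s/y)`, so that `I(x) = -((2+s) log(1+s) + (2-s) log(1-s))/2`, resp.
`I(x) = s arctan s - log(1+s²)`. Both expressions vanish at `s = 0` and are strictly increasing
in `s`, hence positive. Elementary estimates give `f < 2` on `(-∞, 0)` and `f > 2` on `(0, 1)`,
so `t_2 = 0` and `I(2) = 0`.
-/

open Real Set MeasureTheory

open Filter Topology

theorem lt_of_hasDerivAt_of_pos {g g' : ℝ → ℝ} {a b : ℝ} (hab : a < b)
    (hg : ∀ x ∈ Icc a b, HasDerivAt g (g' x) x) (hg' : ∀ x ∈ Ioo a b, 0 < g' x) :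
    g a < g b :=
  strictMonoOn_of_hasDerivWithinAt_pos (convex_Icc a b)
    (fun x hx => (hg x hx).continuousAt.continuousWithinAt)
    (fun x hx => (hg x (interior_subset hx)).hasDerivWithinAt) (by rwa [interior_Icc])
    (left_mem_Icc.2 hab.le) (right_mem_Icc.2 hab.le) hab

namespace Real

theorem arctan_lt_self {s : ℝ} (hs : 0 < s) : arctan s < s := by
  have key := lt_of_hasDerivAt_of_pos (g := fun x => x - arctan x) hs
    (fun x _ => (hasDerivAt_id' x).sub (hasDerivAt_arctan x))
    (fun x hx => by
      have : 1 / (1 + x ^ 2) < 1 := by rw [div_lt_one (by positivity)]; nlinarith [hx.1]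
      linarith)
  simp only [arctan_zero, sub_zero] at key
  linarith

theorem div_one_add_sq_lt_arctan {s : ℝ} (hs : 0 < s) : s / (1 + s ^ 2) < arctan s := by
  have key := lt_of_hasDerivAt_of_pos (g := fun x => arctan x - x / (1 + x ^ 2))
    (g' := fun x => 2 * x ^ 2 / (1 + x ^ 2) ^ 2) hs
    (fun x _ => by
      have hx : (1 : ℝ) + x ^ 2 ≠ 0 := by positivity
      refine ((hasDerivAt_arctan x).sub ((hasDerivAt_id' x).div
        ((hasDerivAt_pow 2 x).const_add 1) hx)).congr_deriv ?_
      field_simp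
      ring)
    (fun x hx => by have := hx.1; positivity)
  simp only [arctan_zero] at key
  linarith

theorem log_one_add_sq_lt_mul_arctan {s : ℝ} (hs : 0 < s) :
    log (1 + s ^ 2) < s * arctan s := by
  have key := lt_of_hasDerivAt_of_pos (g := fun x => x * arctan x - log (1 + x ^ 2))
    (g' := fun x => arctan x - x / (1 + x ^ 2)) hs
    (fun x _ => by
      have hx : (1 : ℝ) + x ^ 2 ≠ 0 := by positivity
      refine (((hasDerivAt_id' x).mul (hasDerivAt_arctan x)).sub
        (((hasDerivAt_pow 2 x).const_add 1).log hx)).congr_deriv ?_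
      field_simp
      ring)
    (fun x hx => sub_pos.2 (div_one_add_sq_lt_arctan hx.1))
  simpa using key

theorem two_mul_lt_log_one_add_sub_log_one_sub {s : ℝ} (hs0 : 0 < s) (hs1 : s < 1) :
    2 * s < log (1 + s) - log (1 - s) := by
  refine hasSum_lt (i := 1) (fun k => ?_) ?_ (hasSum_pi_single 0 (2 * s))
    (hasSum_log_sub_log_of_abs_lt_one (by rwa [abs_of_pos hs0]))
  · rcases k with _ | k
    · simp
    · simp only [Pi.single_apply, Nat.succ_ne_zero, if_false]
      positivity
  · simp only [Pi.single_apply, one_ne_zero, if_false]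
    positivity

theorem log_one_add_sub_log_one_sub_lt {s : ℝ} (hs0 : 0 < s) (hs1 : s < 1) :
    log (1 + s) - log (1 - s) < 2 * s / (1 - s ^ 2) := by
  have hgeom : HasSum (fun k : ℕ => 2 * s * (s ^ 2) ^ k) (2 * s / (1 - s ^ 2)) :=
    (hasSum_geometric_of_lt_one (sq_nonneg s) (by nlinarith)).mul_left (2 * s)
  refine hasSum_lt (i := 1) (fun k => ?_) ?_
    (hasSum_log_sub_log_of_abs_lt_one (by rwa [abs_of_pos hs0])) hgeom
  · have hk : 1 / (2 * (k : ℝ) + 1) ≤ 1 := by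
      rw [div_le_one (by positivity)]
      linarith [k.cast_nonneg (α := ℝ)]
    calc 2 * (1 / (2 * (k : ℝ) + 1)) * s ^ (2 * k + 1) ≤ 2 * 1 * s ^ (2 * k + 1) := by gcongr
      _ = 2 * s * (s ^ 2) ^ k := by ring
  · norm_num
    nlinarith [pow_pos hs0 3]

theorem two_add_mul_log_one_add_add_two_sub_mul_log_one_sub_neg {s : ℝ} (hs0 : 0 < s)
    (hs1 : s < 1) : (2 + s) * log (1 + s) + (2 - s) * log (1 - s) < 0 := by
  have key := lt_of_hasDerivAt_of_pos
    (g := fun x => -((2 + x) * log (1 + x) + (2 - x) * log (1 - x)))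
    (g' := fun x => 2 * x / (1 - x ^ 2) - (log (1 + x) - log (1 - x))) hs0
    (fun x hx => by
      have h1 : 0 < 1 + x := by linarith [hx.1]
      have h2 : 0 < 1 - x := by linarith [hx.2]
      refine (((((hasDerivAt_id' x).const_add 2).mul (((hasDerivAt_id' x).const_add 1).log
        h1.ne')).add (((hasDerivAt_id' x).const_sub 2).mul
        (((hasDerivAt_id' x).const_sub 1).log h2.ne'))).neg).congr_deriv ?_
      have : (1 : ℝ) - x ^ 2 ≠ 0 := by nlinarith
      field_simp
      ring)
    (fun x hx => sub_pos.2 (log_one_add_sub_log_one_sub_lt hx.1 (hx.2.trans hs1)))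
  simp only [add_zero, sub_zero, log_one, mul_zero, neg_zero] at key
  linarith

end Real

theorem hasDerivAt_mul_log_one_sub_div_sq {t y : ℝ} (hy : 0 < y) (ht : t < y ^ 2) :
    HasDerivAt (fun y => y * log (1 - t / y ^ 2))
      (log (1 - t / y ^ 2) + 2 * t / (y ^ 2 - t)) y := by
  have hy2 : y ^ 2 ≠ 0 := by positivity
  have hpos : 0 < 1 - t / y ^ 2 := by rw [sub_pos, div_lt_one (by positivity)]; exact ht
  refine ((hasDerivAt_id' y).mul (((hasDerivAt_const y t).fun_div (hasDerivAt_pow 2 y)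
    hy2).const_sub 1 |>.log hpos.ne')).congr_deriv ?_
  have : y ^ 2 - t ≠ 0 := by linarith
  field_simp
  ring

theorem tendsto_mul_log_one_sub_div_sq (t : ℝ) :
    Tendsto (fun y => y * log (1 - t / y ^ 2)) atTop (𝓝 0) := by
  have h := tendsto_inv_atTop_zero.mul
    ((tendsto_mul_log_one_add_div_atTop (-t)).comp (tendsto_pow_atTop two_ne_zero))
  rw [zero_mul] at h
  refine h.congr' ?_
  filter_upwards [eventually_gt_atTop (0 : ℝ)] with y hy
  simp only [Function.comp_apply, neg_div, ← sub_eq_add_neg]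
  field_simp

/-- `G` completes `y ↦ y log (1 - t / y²)` to an antiderivative vanishing at infinity. No
integrability hypothesis is needed since the integrand has the constant sign of `-t`. -/
theorem integral_Ioi_one_log_one_sub_div_sq {t : ℝ} (ht : t < 1) {G : ℝ → ℝ}
    (hG : ∀ y ∈ Ici (1 : ℝ), HasDerivAt G (-(2 * t / (y ^ 2 - t))) y)
    (hG_lim : Tendsto G atTop (𝓝 0)) :
    ∫ y in Ioi (1 : ℝ), log (1 - t / y ^ 2) = -(log (1 - t) + G 1) := by
  have hF : ∀ y ∈ Ici (1 : ℝ),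
      HasDerivAt (fun y => y * log (1 - t / y ^ 2) + G y) (log (1 - t / y ^ 2)) y := by
    intro y hy
    have hy0 : 0 < y := one_pos.trans_le hy
    have := (hasDerivAt_mul_log_one_sub_div_sq hy0 (by nlinarith [mem_Ici.1 hy])).add (hG y hy)
    exact this.congr_deriv (by ring)
  have hF_lim : Tendsto (fun y => y * log (1 - t / y ^ 2) + G y) atTop (𝓝 0) := by
    simpa using (tendsto_mul_log_one_sub_div_sq t).add hG_lim
  rcases le_total t 0 with ht0 | ht0
  · rw [integral_Ioi_of_hasDerivAt_of_nonneg' hF (fun y hy => log_nonneg ?_) hF_lim]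
    · simp
    · have : t / y ^ 2 ≤ 0 := div_nonpos_of_nonpos_of_nonneg ht0 (sq_nonneg y)
      linarith
  · rw [integral_Ioi_of_hasDerivAt_of_nonpos' hF (fun y hy => log_nonpos ?_ ?_) hF_lim]
    · simp
    · have hy1 : 1 < y := hy
      rw [sub_nonneg, div_le_one (by positivity)]
      nlinarith
    · have : 0 ≤ t / y ^ 2 := by positivity
      linarith

theorem integral_Ioi_one_log_one_sub_sq_div_sq {s : ℝ} (hs0 : 0 < s) (hs1 : s < 1) :
    ∫ y in Ioi (1 : ℝ), log (1 - s ^ 2 / y ^ 2) =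
      -(log (1 - s ^ 2) + s * (log (1 + s) - log (1 - s))) := by
  have hu : Tendsto (fun y : ℝ => s / y) atTop (𝓝 0) := tendsto_const_nhds.div_atTop tendsto_id
  have hG_lim : Tendsto (fun y => s * (log (1 + s / y) - log (1 - s / y))) atTop (𝓝 0) := by
    simpa using (((hu.const_add 1).log (by norm_num)).sub
      ((hu.const_sub 1).log (by norm_num))).const_mul s
  refine (integral_Ioi_one_log_one_sub_div_sq (by nlinarith) (fun y hy => ?_) hG_lim).trans
    (by simp)
  have hy0 : 0 < y := one_pos.trans_le hy
  have hsy : s < y := hs1.trans_le hy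
  have hu' := (hasDerivAt_const y s).fun_div (hasDerivAt_id' y) hy0.ne'
  have h1 : 0 < 1 + s / y := by positivity
  have h2 : 0 < 1 - s / y := by rw [sub_pos, div_lt_one hy0]; exact hsy
  refine (((hu'.const_add 1).log h1.ne').sub ((hu'.const_sub 1).log h2.ne')).const_mul s
    |>.congr_deriv ?_
  have : y ^ 2 - s ^ 2 ≠ 0 := by nlinarith
  have : y - s ≠ 0 := by linarith
  field_simp
  ring

theorem integral_Ioi_one_log_one_sub_neg_sq_div_sq {s : ℝ} (hs : 0 < s) :
    ∫ y in Ioi (1 : ℝ), log (1 - -s ^ 2 / y ^ 2) = 2 * s * arctan s - log (1 + s ^ 2) := by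
  have hu : Tendsto (fun y : ℝ => s / y) atTop (𝓝 0) := tendsto_const_nhds.div_atTop tendsto_id
  have hG_lim : Tendsto (fun y => -(2 * s * arctan (s / y))) atTop (𝓝 0) := by
    simpa using ((continuous_arctan.tendsto 0).comp hu).const_mul (2 * s) |>.neg
  refine (integral_Ioi_one_log_one_sub_div_sq (by nlinarith) (fun y hy => ?_) hG_lim).trans
    (by simp only [sub_neg_eq_add, div_one, neg_add_rev, neg_neg]; ring)
  have hy0 : 0 < y := one_pos.trans_le hy
  have hu' := (hasDerivAt_const y s).fun_div (hasDerivAt_id' y) hy0.ne'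
  refine (((hasDerivAt_arctan _).comp y hu').const_mul (2 * s)).neg.congr_deriv ?_
  have : y ^ 2 + s ^ 2 ≠ 0 := by positivity
  rw [sub_neg_eq_add]
  field_simp
  ring

theorem exists_pos_sq_eq_of_pos {t : ℝ} (ht : 0 < t) : ∃ s, 0 < s ∧ s ^ 2 = t :=
  ⟨√t, sqrt_pos.2 ht, sq_sqrt ht.le⟩

theorem exists_pos_neg_sq_eq_of_neg {t : ℝ} (ht : t < 0) : ∃ s, 0 < s ∧ -s ^ 2 = t :=
  ⟨√(-t), sqrt_pos.2 (neg_pos.2 ht), by rw [sq_sqrt (neg_pos.2 ht).le, neg_neg]⟩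

theorem kingmanF_zero : kingmanF 0 = 2 := by simp [kingmanF]

theorem kingmanF_sq {s : ℝ} (hs : 0 < s) : kingmanF (s ^ 2) = log ((1 + s) / (1 - s)) / s := by
  rw [kingmanF, if_pos (by positivity), sqrt_sq hs.le, one_div_mul_eq_div]

theorem kingmanF_neg_sq {s : ℝ} (hs : 0 < s) : kingmanF (-s ^ 2) = 2 * arctan s / s := by
  rw [kingmanF, if_neg (by nlinarith), if_neg (neg_ne_zero.2 (pow_ne_zero 2 hs.ne')), abs_neg,
    abs_sq, sqrt_sq hs.le, div_mul_eq_mul_div]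

theorem eq_zero_of_kingmanF_eq_two {t : ℝ} (ht : t < 1) (h : kingmanF t = 2) : t = 0 := by
  rcases lt_trichotomy t 0 with ht0 | ht0 | ht0
  · obtain ⟨s, hs, rfl⟩ := exists_pos_neg_sq_eq_of_neg ht0
    rw [kingmanF_neg_sq hs, div_eq_iff hs.ne'] at h
    linarith [arctan_lt_self hs]
  · exact ht0
  · obtain ⟨s, hs, rfl⟩ := exists_pos_sq_eq_of_pos ht0
    have hs1 : s < 1 := by nlinarith
    rw [kingmanF_sq hs, div_eq_iff hs.ne', log_div (by linarith) (by linarith)] at h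
    linarith [two_mul_lt_log_one_add_sub_log_one_sub hs hs1]

/-- `I(x)` in terms of `t = t_x`, using `x = f(t_x)`. -/
noncomputable def kingmanRate (t : ℝ) : ℝ :=
  t / 2 * kingmanF t + ∫ y in Ioi (1 : ℝ), log (1 - t / y ^ 2)

theorem kingmanRate_zero : kingmanRate 0 = 0 := by simp [kingmanRate]

theorem kingmanRate_sq {s : ℝ} (hs0 : 0 < s) (hs1 : s < 1) :
    kingmanRate (s ^ 2) = -((2 + s) * log (1 + s) + (2 - s) * log (1 - s)) / 2 := by
  have h1 : 1 + s ≠ 0 := by linarith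
  have h2 : 1 - s ≠ 0 := by linarith
  rw [kingmanRate, kingmanF_sq hs0, integral_Ioi_one_log_one_sub_sq_div_sq hs0 hs1,
    log_div h1 h2, show 1 - s ^ 2 = (1 + s) * (1 - s) by ring, log_mul h1 h2]
  field_simp
  ring

theorem kingmanRate_neg_sq {s : ℝ} (hs : 0 < s) :
    kingmanRate (-s ^ 2) = s * arctan s - log (1 + s ^ 2) := by
  rw [kingmanRate, kingmanF_neg_sq hs, integral_Ioi_one_log_one_sub_neg_sq_div_sq hs]
  field_simp
  ring

theorem kingmanRate_pos {t : ℝ} (ht1 : t < 1) (ht0 : t ≠ 0) : 0 < kingmanRate t := by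
  rcases ht0.lt_or_gt with ht0 | ht0
  · obtain ⟨s, hs, rfl⟩ := exists_pos_neg_sq_eq_of_neg ht0
    rw [kingmanRate_neg_sq hs]
    linarith [log_one_add_sq_lt_mul_arctan hs]
  · obtain ⟨s, hs, rfl⟩ := exists_pos_sq_eq_of_pos ht0
    rw [kingmanRate_sq hs (by nlinarith)]
    linarith [two_add_mul_log_one_add_add_two_sub_mul_log_one_sub_neg hs (by nlinarith)]

/-- The rate function `I(x) = (t_x/2)x + ∫₁^∞ log(1 - t_x/y²) dy`, where `t_x < 1`
solves `f(t_x) = x`, satisfies `I(2) = 0` and `I(x) > 0` for `x > 0`, `x ≠ 2`. -/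
theorem kingman_rate_function_min (tx : ℝ → ℝ)
    (htx : ∀ x : ℝ, 0 < x → tx x < 1 ∧ kingmanF (tx x) = x)
    (I : ℝ → ℝ)
    (hI : ∀ x : ℝ, 0 < x →
      I x = tx x / 2 * x + ∫ y in Ioi (1:ℝ), Real.log (1 - tx x / y ^ 2)) :
    I 2 = 0 ∧ ∀ x : ℝ, 0 < x → x ≠ 2 → 0 < I x := by
  have hI_rate : ∀ x, 0 < x → I x = kingmanRate (tx x) := fun x hx => by
    rw [hI x hx, kingmanRate, (htx x hx).2]
  refine ⟨?_, fun x hx hx2 => ?_⟩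
  · obtain ⟨ht1, hf⟩ := htx 2 two_pos
    rw [hI_rate 2 two_pos, eq_zero_of_kingmanF_eq_two ht1 hf, kingmanRate_zero]
  · obtain ⟨ht1, hf⟩ := htx x hx
    rw [hI_rate x hx]
    refine kingmanRate_pos ht1 fun ht0 => hx2 ?_
    rw [← hf, ht0, kingmanF_zero]
end

section
/- With I as the rate function defined in Theorem 1 (I(x) = (t_x/2)x + ∫₁^∞ log(1 - t_x/y²) dy where f(t_x)=x), the limit lim_{x↓0} x·I(x) = π²/2 holds. -/
/-!
For `0 < x < 1` the root `t_x` of `f(t_x) = x` is negative, and with `t_x = -s²` the equation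
reads `x s = 2 arctan s`; since `arctan s > s / √(1 + s²)`, this forces `s → ∞`, hence `x s → π`,
as `x ↓ 0`. The antiderivative `y log(1 + s²/y²) - 2 s arctan(s/y)` gives
`∫₁^∞ log(1 + s²/y²) dy = 2 s arctan s - log(1 + s²)`, so `x I(x) = (x s)²/2 - x log(1 + s²)`,
and `x log(1 + s²) = x s · log(1 + s²)/s → π · 0`.
-/

open Real Set MeasureTheory Filter
open scoped Topology

lemma one_le_kingmanF {t : ℝ} (h0 : 0 ≤ t) (h1 : t < 1) : 1 ≤ kingmanF t := by
  rcases h0.eq_or_lt with rfl | ht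
  · simp [kingmanF]
  set r := √t
  have hr0 : 0 < r := sqrt_pos.mpr ht
  have hr1 : r < 1 := (sqrt_lt' one_pos).mpr (by simpa using h1)
  have hr_le_log : r ≤ log ((1 + r) / (1 - r)) := by
    rw [log_div (by linarith) (by linarith)]
    linarith [log_le_sub_one_of_pos (by linarith : 0 < 1 - r), log_nonneg (by linarith : 1 ≤ 1 + r)]
  rw [kingmanF, if_pos ht, one_div, ← div_eq_inv_mul, le_div_iff₀ hr0, one_mul]
  exact hr_le_log

lemma neg_of_kingmanF_lt_one {t : ℝ} (ht : t < 1) (h : kingmanF t < 1) : t < 0 :=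
  not_le.mp fun h0 => (one_le_kingmanF h0 ht).not_gt h

lemma kingmanF_mul_sqrt_neg {t : ℝ} (ht : t < 0) :
    kingmanF t * √(-t) = 2 * arctan √(-t) := by
  have hs : 0 < √(-t) := sqrt_pos.mpr (neg_pos.mpr ht)
  rw [kingmanF, if_neg ht.not_gt, if_neg ht.ne, abs_of_neg ht]
  field_simp

lemma hasDerivAt_mul_log_one_add_sq_div_sq_sub (s : ℝ) {y : ℝ} (hy : 0 < y) :
    HasDerivAt (fun y => y * log (1 + s ^ 2 / y ^ 2) - 2 * s * arctan (s / y))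
      (log (1 + s ^ 2 / y ^ 2)) y := by
  have hy2 : y ^ 2 ≠ 0 := by positivity
  have hpos : 0 < 1 + s ^ 2 / y ^ 2 := by positivity
  have hlog := (((hasDerivAt_const y (s ^ 2)).div (hasDerivAt_pow 2 y) hy2).const_add 1).log
    hpos.ne'
  have harctan := ((hasDerivAt_const y s).div (hasDerivAt_id y) hy.ne').arctan
  refine (((hasDerivAt_id y).mul hlog).sub (harctan.const_mul (2 * s))).congr_deriv ?_
  simp only [Pi.div_apply, id]
  field_simp
  ring

lemma tendsto_mul_log_one_add_div_sq_atTop {c : ℝ} (hc : 0 ≤ c) :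
    Tendsto (fun y : ℝ => y * log (1 + c / y ^ 2)) atTop (𝓝 0) := by
  refine squeeze_zero' ?_ ?_ (tendsto_const_nhds.div_atTop tendsto_id : Tendsto (c / ·) _ _)
  · filter_upwards [eventually_gt_atTop 0] with y hy
    exact mul_nonneg hy.le (log_nonneg (le_add_of_nonneg_right (by positivity)))
  · filter_upwards [eventually_gt_atTop 0] with y hy
    have hlog_le : log (1 + c / y ^ 2) ≤ c / y ^ 2 := by
      linarith [log_le_sub_one_of_pos (by positivity : 0 < 1 + c / y ^ 2)]
    calc y * log (1 + c / y ^ 2) ≤ y * (c / y ^ 2) := mul_le_mul_of_nonneg_left hlog_le hy.le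
      _ = c / y := by field_simp

lemma integral_Ioi_one_log_one_add_sq_div_sq (s : ℝ) :
    ∫ y in Ioi (1 : ℝ), log (1 + s ^ 2 / y ^ 2) = 2 * s * arctan s - log (1 + s ^ 2) := by
  have hderiv : ∀ y ∈ Ioi (1 : ℝ), HasDerivAt
      (fun y => y * log (1 + s ^ 2 / y ^ 2) - 2 * s * arctan (s / y))
      (log (1 + s ^ 2 / y ^ 2)) y :=
    fun y hy => hasDerivAt_mul_log_one_add_sq_div_sq_sub s (one_pos.trans hy)
  have hlim : Tendsto (fun y => y * log (1 + s ^ 2 / y ^ 2) - 2 * s * arctan (s / y))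
      atTop (𝓝 (0 - 2 * s * arctan 0)) :=
    (tendsto_mul_log_one_add_div_sq_atTop (sq_nonneg s)).sub
      (((continuous_arctan.tendsto 0).comp (tendsto_const_nhds.div_atTop tendsto_id)).const_mul _)
  rw [integral_Ioi_of_hasDerivAt_of_nonneg
    (hasDerivAt_mul_log_one_add_sq_div_sq_sub s one_pos).continuousAt.continuousWithinAt hderiv
    (fun y _ => log_nonneg (le_add_of_nonneg_right (by positivity))) hlim]
  simp

lemma tendsto_log_one_add_sq_div_atTop :
    Tendsto (fun s : ℝ => log (1 + s ^ 2) / s) atTop (𝓝 0) := by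
  have hlog_div : Tendsto (fun s : ℝ => log (s + 1) / s) atTop (𝓝 0) := by
    have := (tendsto_pow_log_div_mul_add_atTop 1 (-1) 1 one_ne_zero).comp
      (tendsto_atTop_add_const_right _ 1 tendsto_id)
    simpa [Function.comp_def] using this
  refine squeeze_zero' ?_ ?_ (by simpa using hlog_div.const_mul 2)
  · filter_upwards [eventually_gt_atTop 0] with s hs
    exact div_nonneg (log_nonneg (le_add_of_nonneg_right (by positivity))) hs.le
  · filter_upwards [eventually_gt_atTop 0] with s hs
    have : log (1 + s ^ 2) ≤ 2 * log (s + 1) :=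
      calc log (1 + s ^ 2) ≤ log ((s + 1) ^ 2) := log_le_log (by positivity) (by nlinarith)
        _ = 2 * log (s + 1) := by simp [log_pow]
    rw [mul_div_assoc']
    gcongr

lemma div_sqrt_one_add_sq_lt_arctan {s : ℝ} (hs : 0 < s) : s / √(1 + s ^ 2) < arctan s :=
  sin_arctan s ▸ sin_lt (arctan_pos.mpr hs)

lemma tendsto_atTop_of_mul_eq_two_arctan {s : ℝ → ℝ}
    (h : ∀ᶠ x in 𝓝[>] 0, 0 < s x ∧ x * s x = 2 * arctan (s x)) :
    Tendsto s (𝓝[>] 0) atTop := by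
  refine tendsto_atTop_mono' _ ?_ (tendsto_atTop_add_const_right _ (-1)
    (tendsto_inv_nhdsGT_zero.const_mul_atTop two_pos))
  filter_upwards [h, self_mem_nhdsWithin] with x ⟨hs, hxs⟩ (hx : 0 < x)
  have hroot : √(1 + s x ^ 2) ≤ 1 + s x := (sqrt_le_left (by positivity)).mpr (by nlinarith)
  have hroot_pos : 0 < √(1 + s x ^ 2) := by positivity
  have hlt := div_sqrt_one_add_sq_lt_arctan hs
  rw [div_lt_iff₀ hroot_pos] at hlt
  have : 2 * s x < x * (1 + s x) * s x :=
    calc 2 * s x < 2 * arctan (s x) * √(1 + s x ^ 2) := by linarith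
      _ = x * s x * √(1 + s x ^ 2) := by rw [hxs]
      _ ≤ x * s x * (1 + s x) := by gcongr
      _ = x * (1 + s x) * s x := by ring
  have := (div_lt_iff₀' hx).mpr (lt_of_mul_lt_mul_right this hs.le)
  rw [div_eq_mul_inv] at this
  linarith

/-- With `I` the rate function of Theorem 1, `x·I(x) → π²/2` as `x ↓ 0`. -/
theorem kingman_rate_function_at_zero (tx : ℝ → ℝ)
    (htx : ∀ x : ℝ, 0 < x → tx x < 1 ∧ kingmanF (tx x) = x)
    (I : ℝ → ℝ)
    (hI : ∀ x : ℝ, 0 < x →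
      I x = tx x / 2 * x + ∫ y in Ioi (1:ℝ), Real.log (1 - tx x / y ^ 2)) :
    Tendsto (fun x : ℝ => x * I x) (nhdsWithin 0 (Ioi 0)) (nhds (π ^ 2 / 2)) := by
  set s : ℝ → ℝ := fun x => √(-tx x)
  have hsol : ∀ x ∈ Ioo (0 : ℝ) 1,
      0 < s x ∧ tx x = -s x ^ 2 ∧ x * s x = 2 * arctan (s x) := by
    rintro x ⟨hx0, hx1⟩
    obtain ⟨ht1, hfx⟩ := htx x hx0
    have ht0 : tx x < 0 := neg_of_kingmanF_lt_one ht1 (by rwa [hfx])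
    refine ⟨sqrt_pos.mpr (neg_pos.mpr ht0), by simp [s, sq_sqrt (neg_nonneg.mpr ht0.le)], ?_⟩
    simpa only [hfx] using kingmanF_mul_sqrt_neg ht0
  have hev : ∀ᶠ x in 𝓝[>] (0 : ℝ), x ∈ Ioo 0 1 := Ioo_mem_nhdsGT one_pos
  have hs : Tendsto s (𝓝[>] 0) atTop :=
    tendsto_atTop_of_mul_eq_two_arctan (hev.mono fun x hx => ⟨(hsol x hx).1, (hsol x hx).2.2⟩)
  have hxs : Tendsto (fun x => x * s x) (𝓝[>] 0) (𝓝 π) := by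
    have := ((tendsto_arctan_atTop.mono_right nhdsWithin_le_nhds).comp hs).const_mul 2
    rw [mul_div_cancel₀ _ two_ne_zero] at this
    exact this.congr' (hev.mono fun x hx => (hsol x hx).2.2.symm)
  have hlim := ((hxs.pow 2).div_const 2).sub (hxs.mul (tendsto_log_one_add_sq_div_atTop.comp hs))
  rw [mul_zero, sub_zero] at hlim
  refine hlim.congr' ?_
  filter_upwards [hev] with x hx
  obtain ⟨hs0, ht, hsx⟩ := hsol x hx
  simp_rw [Function.comp_apply, hI x hx.1, ht, neg_div, sub_neg_eq_add,
    integral_Ioi_one_log_one_add_sq_div_sq]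
  field_simp
  linear_combination 2 * x * s x * hsx
end

section
/- With I as the rate function from Theorem 1, lim_{x→∞} I(x)/x = 1/2. -/
/-!
Writing `I x / x = t_x / 2 + J(t_x) / x` with `J(t) = ∫_{(1,∞)} log (1 - t / y²)`, it suffices that
`t_x → 1` and that `J` is bounded on `[0, 1]`.

From `log z ≤ z - 1` one gets `kingmanF t ≤ 2 / (1 - √t)` on `(0, 1)`, while `kingmanF ≤ 2` on
`(-∞, 0]`; so for `x > 2` the equation `kingmanF t_x = x` forces `1 - 2 / x ≤ √t_x < 1`.

For the bound on `J`, `-log u ≤ 2 (u^{-1/2} - 1)` dominates `|log (1 - t / y²)|` by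
`2 (y / √(y² - 1) - 1)`, the derivative of `2 (√(y² - 1) - y)`, whose integral over `(1, ∞)` is `2`.
-/

open Real Set MeasureTheory Filter

open Topology

lemma neg_log_le_two_mul_inv_sqrt_sub_one {u : ℝ} (hu : 0 < u) :
    -log u ≤ 2 * ((√u)⁻¹ - 1) := by
  have h := log_le_sub_one_of_pos (inv_pos.2 (sqrt_pos.2 hu))
  rw [log_inv, log_sqrt hu.le] at h
  linarith

lemma hasDerivAt_two_mul_sqrt_sq_sub_one_sub_self {y : ℝ} (hy : 1 < y) :
    HasDerivAt (fun y => 2 * (√(y ^ 2 - 1) - y)) (2 * (y / √(y ^ 2 - 1) - 1)) y := by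
  have hpos : 0 < y ^ 2 - 1 := by nlinarith
  refine ((((hasDerivAt_pow 2 y).sub_const 1).sqrt hpos.ne').sub
    (hasDerivAt_id' y) |>.const_mul 2).congr_deriv ?_
  field_simp
  ring

lemma tendsto_two_mul_sqrt_sq_sub_one_sub_self :
    Tendsto (fun y : ℝ => 2 * (√(y ^ 2 - 1) - y)) atTop (𝓝 0) := by
  have hden : Tendsto (fun y : ℝ => √(y ^ 2 - 1) + y) atTop atTop :=
    tendsto_atTop_mono (fun _ => le_add_of_nonneg_left (sqrt_nonneg _)) tendsto_id
  have h := hden.inv_tendsto_atTop.const_mul (-2)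
  rw [mul_zero] at h
  refine h.congr' ?_
  filter_upwards [eventually_ge_atTop 1] with y hy
  have hsq : √(y ^ 2 - 1) ^ 2 = y ^ 2 - 1 := sq_sqrt (by nlinarith)
  have hden_pos : 0 < √(y ^ 2 - 1) + y := by positivity
  simp only [Pi.inv_apply]
  field_simp
  nlinarith

lemma one_le_div_sqrt_sq_sub_one {y : ℝ} (hy : 1 < y) : 1 ≤ y / √(y ^ 2 - 1) :=
  (one_le_div (sqrt_pos.2 (by nlinarith))).2 (sqrt_le_iff.2 ⟨by linarith, by linarith⟩)

lemma continuous_two_mul_sqrt_sq_sub_one_sub_self :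
    Continuous fun y : ℝ => 2 * (√(y ^ 2 - 1) - y) := by
  fun_prop

lemma integrableOn_two_mul_div_sqrt_sq_sub_one_sub_one :
    IntegrableOn (fun y => 2 * (y / √(y ^ 2 - 1) - 1)) (Ioi 1) :=
  integrableOn_Ioi_deriv_of_nonneg
    continuous_two_mul_sqrt_sq_sub_one_sub_self.continuousWithinAt
    (fun _ hy => hasDerivAt_two_mul_sqrt_sq_sub_one_sub_self hy)
    (fun _ hy => by linarith [one_le_div_sqrt_sq_sub_one hy])
    tendsto_two_mul_sqrt_sq_sub_one_sub_self

lemma integral_two_mul_div_sqrt_sq_sub_one_sub_one :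
    ∫ y in Ioi (1 : ℝ), 2 * (y / √(y ^ 2 - 1) - 1) = 2 := by
  rw [integral_Ioi_of_hasDerivAt_of_tendsto
    continuous_two_mul_sqrt_sq_sub_one_sub_self.continuousWithinAt
    (fun _ hy => hasDerivAt_two_mul_sqrt_sq_sub_one_sub_self hy)
    integrableOn_two_mul_div_sqrt_sq_sub_one_sub_one
    tendsto_two_mul_sqrt_sq_sub_one_sub_self]
  norm_num

lemma abs_log_one_sub_div_sq_le {t y : ℝ} (ht₀ : 0 ≤ t) (ht₁ : t ≤ 1) (hy : 1 < y) :
    |log (1 - t / y ^ 2)| ≤ 2 * (y / √(y ^ 2 - 1) - 1) := by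
  have hy₀ : 0 < y := one_pos.trans hy
  have hy₂ : 0 < y ^ 2 - 1 := by nlinarith
  have hu : 0 < 1 - 1 / y ^ 2 := by
    rw [sub_pos, div_lt_one (by positivity)]
    linarith
  have hut : 1 - 1 / y ^ 2 ≤ 1 - t / y ^ 2 := by gcongr
  have hle : 1 - t / y ^ 2 ≤ 1 := sub_le_self 1 (by positivity)
  have hsqrt : (√(1 - 1 / y ^ 2))⁻¹ = y / √(y ^ 2 - 1) := by
    rw [show 1 - 1 / y ^ 2 = (y ^ 2 - 1) / y ^ 2 by field_simp, sqrt_div hy₂.le,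
      sqrt_sq hy₀.le, inv_div]
  calc |log (1 - t / y ^ 2)| = -log (1 - t / y ^ 2) :=
        abs_of_nonpos (log_nonpos (hu.le.trans hut) hle)
    _ ≤ -log (1 - 1 / y ^ 2) := neg_le_neg (log_le_log hu hut)
    _ ≤ 2 * (y / √(y ^ 2 - 1) - 1) := hsqrt ▸ neg_log_le_two_mul_inv_sqrt_sub_one hu

lemma norm_integral_log_one_sub_div_sq_le_two {t : ℝ} (ht₀ : 0 ≤ t) (ht₁ : t ≤ 1) :
    ‖∫ y in Ioi (1 : ℝ), log (1 - t / y ^ 2)‖ ≤ 2 := by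
  rw [← integral_two_mul_div_sqrt_sq_sub_one_sub_one]
  refine norm_integral_le_of_norm_le integrableOn_two_mul_div_sqrt_sq_sub_one_sub_one ?_
  filter_upwards [ae_restrict_mem measurableSet_Ioi] with y hy
  exact abs_log_one_sub_div_sq_le ht₀ ht₁ hy

lemma kingmanF_le_two_of_nonpos {t : ℝ} (ht : t ≤ 0) : kingmanF t ≤ 2 := by
  rcases ht.eq_or_lt with rfl | ht
  · simp [kingmanF]
  have hs : 0 < √|t| := sqrt_pos.2 (abs_pos.2 ht.ne)
  have harctan : arctan √|t| ≤ √|t| := by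
    simpa using le_tan (arctan_nonneg.2 hs.le) (arctan_lt_pi_div_two √|t|)
  rw [kingmanF, if_neg ht.not_gt, if_neg ht.ne]
  calc 2 / √|t| * arctan √|t| ≤ 2 / √|t| * √|t| := by gcongr
    _ = 2 := div_mul_cancel₀ 2 hs.ne'

lemma kingmanF_le_two_div_one_sub_sqrt {t : ℝ} (ht₀ : 0 < t) (ht₁ : t < 1) :
    kingmanF t ≤ 2 / (1 - √t) := by
  have hs₀ : 0 < √t := sqrt_pos.2 ht₀
  have hs₁ : 0 < 1 - √t := sub_pos.2 ((sqrt_lt' one_pos).2 (by simpa using ht₁))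
  rw [kingmanF, if_pos ht₀]
  calc 1 / √t * log ((1 + √t) / (1 - √t)) ≤ 1 / √t * ((1 + √t) / (1 - √t) - 1) := by
        gcongr
        exact log_le_sub_one_of_pos (by positivity)
    _ = 2 / (1 - √t) := by
        field_simp
        ring

lemma pos_of_kingmanF_eq {t x : ℝ} (hF : kingmanF t = x) (hx : 2 < x) : 0 < t :=
  lt_of_not_ge fun ht => by linarith [kingmanF_le_two_of_nonpos ht]

lemma sq_one_sub_two_div_le_of_kingmanF_eq {t x : ℝ} (ht : t < 1) (hF : kingmanF t = x)
    (hx : 2 < x) : (1 - 2 / x) ^ 2 ≤ t := by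
  have ht₀ := pos_of_kingmanF_eq hF hx
  have hs₁ : 0 < 1 - √t := sub_pos.2 ((sqrt_lt' one_pos).2 (by simpa using ht))
  have hx' : x ≤ 2 / (1 - √t) := hF ▸ kingmanF_le_two_div_one_sub_sqrt ht₀ ht
  have hsqrt : 1 - 2 / x ≤ √t := by
    rw [le_div_iff₀ hs₁] at hx'
    rw [sub_le_comm, le_div_iff₀ (by linarith)]
    linarith
  have hnonneg : 0 ≤ 1 - 2 / x := sub_nonneg.2 ((div_le_one (by linarith)).2 hx.le)
  calc (1 - 2 / x) ^ 2 ≤ √t ^ 2 := pow_le_pow_left₀ hnonneg hsqrt 2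
    _ = t := sq_sqrt ht₀.le

lemma tendsto_of_kingmanF_eq {tx : ℝ → ℝ}
    (htx : ∀ᶠ x in atTop, tx x < 1 ∧ kingmanF (tx x) = x) : Tendsto tx atTop (𝓝 1) := by
  have hlower : Tendsto (fun x : ℝ => (1 - 2 / x) ^ 2) atTop (𝓝 1) := by
    simpa using ((tendsto_const_nhds (x := (2 : ℝ)).div_atTop tendsto_id).const_sub 1).pow 2
  refine tendsto_of_tendsto_of_tendsto_of_le_of_le' hlower tendsto_const_nhds ?_ ?_
  · filter_upwards [htx, eventually_gt_atTop 2] with x ⟨ht, hF⟩ hx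
    exact sq_one_sub_two_div_le_of_kingmanF_eq ht hF hx
  · filter_upwards [htx] with x hx
    exact hx.1.le

/-- With `I` the rate function of Theorem 1, `I(x)/x → 1/2` as `x → ∞`. -/
theorem kingman_rate_function_at_infty (tx : ℝ → ℝ)
    (htx : ∀ x : ℝ, 0 < x → tx x < 1 ∧ kingmanF (tx x) = x)
    (I : ℝ → ℝ)
    (hI : ∀ x : ℝ, 0 < x →
      I x = tx x / 2 * x + ∫ y in Ioi (1:ℝ), Real.log (1 - tx x / y ^ 2)) :
    Tendsto (fun x : ℝ => I x / x) atTop (nhds (1 / 2)) := by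
  have ht : Tendsto tx atTop (𝓝 1) :=
    tendsto_of_kingmanF_eq ((eventually_gt_atTop 0).mono htx)
  have hJ : Tendsto (fun x => (∫ y in Ioi (1 : ℝ), log (1 - tx x / y ^ 2)) / x) atTop (𝓝 0) := by
    refine squeeze_zero_norm' (a := (2 / ·)) ?_ (tendsto_const_nhds.div_atTop tendsto_id)
    filter_upwards [eventually_gt_atTop 2] with x hx
    obtain ⟨ht₁, hF⟩ := htx x (by linarith)
    rw [norm_div, norm_of_nonneg (by linarith : (0 : ℝ) ≤ x)]
    gcongr
    exact norm_integral_log_one_sub_div_sq_le_two (pos_of_kingmanF_eq hF hx).le ht₁.le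
  have hsplit : (fun x => tx x / 2 + (∫ y in Ioi (1 : ℝ), log (1 - tx x / y ^ 2)) / x)
      =ᶠ[atTop] fun x => I x / x := by
    filter_upwards [eventually_gt_atTop 0] with x hx
    rw [hI x hx, add_div, mul_div_cancel_right₀ _ hx.ne']
  simpa using ((ht.div_const 2).add hJ).congr' hsplit
end
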